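/- Let M, g, s ∈ ℕ with 1 ≤ g ≤ M and s ≤ g − 1, and let A be a finite set with |A| = M − g (the complement of a group of size g in a feature set of size M). Then ∑_{S_0 ⊆ A} (s + |S_0|)! · (M − s − |S_0| − 1)! / M! = s! · (g − s − 1)! / g!, where the sum runs over all subsets S_0 of A. -/

import Mathlib

open Finset

noncomputable def shapleyWeight (n j : ℕ) : ℝ :=
  ((j.factorial * (n - j - 1).factorial : ℕ) : ℝ) / (n.factorial : ℕ)

theorem shapleyWeight_succ_add_shapleyWeight_succ {n j : ℕ} (hj : j < n) :
    shapleyWeight (n + 1) j + shapleyWeight (n + 1) (j + 1) = shapleyWeight n j := by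
  obtain ⟨t, rfl⟩ : ∃ t, n = j + t + 1 := ⟨n - j - 1, by omega⟩
  have hn : j + t + 1 + 1 - j - 1 = t + 1 := by omega
  have hn' : j + t + 1 + 1 - (j + 1) - 1 = t := by omega
  have hm : j + t + 1 - j - 1 = t := by omega
  simp only [shapleyWeight, hn, hn', hm, Nat.factorial_succ]
  push_cast
  field_simp
  ring

/-- Adding a player to the outside set splits each coalition into the one without and the one
with that player; Pascal's rule for the weights collapses the pair. -/
theorem sum_powerset_shapleyWeight {α : Type*} [DecidableEq α] (A : Finset α) {m s : ℕ}
    (hs : s < m) :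
    ∑ S ∈ A.powerset, shapleyWeight (A.card + m) (s + S.card) = shapleyWeight m s := by
  induction A using Finset.induction with
  | empty => simp
  | @insert a A ha ih =>
    rw [sum_powerset_insert ha, ← sum_add_distrib, card_insert_of_notMem ha, ← ih]
    refine sum_congr rfl fun S hS => ?_
    have haS : a ∉ S := fun h => ha (mem_powerset.mp hS h)
    have hlt : s + S.card < A.card + m := by
      have := card_le_card (mem_powerset.mp hS)
      omega
    rw [card_insert_of_notMem haS, add_right_comm A.card, ← add_assoc s,
      shapleyWeight_succ_add_shapleyWeight_succ hlt]

/-- The combinatorial identity: for `1 ≤ g ≤ M`, `s ≤ g - 1` and any finite set `A` of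
cardinality `M - g`, summing the `M`-feature Shapley weights over all subsets of `A`
collapses to the `g`-feature Shapley weight. -/
theorem shapley_weight_collapse {α : Type*} [DecidableEq α]
    (M g s : ℕ) (hg1 : 1 ≤ g) (hgM : g ≤ M) (hs : s ≤ g - 1)
    (A : Finset α) (hA : A.card = M - g) :
    ∑ S0 ∈ A.powerset,
      (((s + S0.card).factorial * (M - s - S0.card - 1).factorial : ℕ) : ℝ) /
        (M.factorial : ℕ) =
      ((s.factorial * (g - s - 1).factorial : ℕ) : ℝ) / (g.factorial : ℕ) := by
  obtain rfl : M = A.card + g := by omega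
  simpa only [shapleyWeight, Nat.sub_sub] using
    sum_powerset_shapleyWeight A (m := g) (s := s) (by omega)
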